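/- arXiv:1402.1692 — 7 statements merged into one kernel-verified Lean document; each statement's English description precedes it below -/
import Mathlib

section
/- Let h : ℝ → ℝ be a smooth function with compact support in [−2,1] satisfying h(0)=1, h'>0 on [−1,0), h'<0 on (0,1), h'(0)=0. Define η : ℝ → ℓ²(ℤ) by η(t) = ∑_{k∈ℤ} h(t−k) e_k, where (e_k) is the standard orthonormal basis. Then η is injective. -/
/-- The curve `η(t) = ∑_{k∈ℤ} h(t-k) e_k` in `ℓ²(ℤ)` is injective, for `h`
smooth with support in `[-2,1]`, `h(0)=1`, `h' > 0` on `[-1,0)`, `h' < 0` on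
`(0,1)`, `h'(0)=0`. -/
theorem stmt7 (h : ℝ → ℝ) (hsm : ContDiff ℝ (⊤ : ℕ∞) h)
    (hsupp : tsupport h ⊆ Set.Icc (-2 : ℝ) 1) (h0 : h 0 = 1)
    (hderiv_pos : ∀ t ∈ Set.Ico (-1 : ℝ) 0, 0 < deriv h t)
    (hderiv_neg : ∀ t ∈ Set.Ioo (0 : ℝ) 1, deriv h t < 0)
    (hderiv0 : deriv h 0 = 0)
    (η : ℝ → lp (fun _ : ℤ => ℝ) 2)
    (hη : ∀ (t : ℝ) (k : ℤ), η t k = h (t - k)) :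
    Function.Injective η := by
  -- h vanishes on [1, ∞)
  have hz : ∀ x : ℝ, 1 ≤ x → h x = 0 := by
    have he : Set.EqOn h 0 (Set.Ioi (1 : ℝ)) := by
      intro x hx
      apply image_eq_zero_of_notMem_tsupport
      intro hmem
      exact absurd (hsupp hmem).2 (not_le.mpr hx)
    intro x hx
    have hx' : x ∈ closure (Set.Ioi (1 : ℝ)) := by rw [closure_Ioi]; exact hx
    exact he.closure hsm.continuous continuous_const hx'
  -- h is strictly decreasing on [0,1]
  have hanti : StrictAntiOn h (Set.Icc (0 : ℝ) 1) := by
    apply strictAntiOn_of_deriv_neg (convex_Icc 0 1) hsm.continuous.continuousOn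
    intro x hx
    rw [interior_Icc] at hx
    exact hderiv_neg x hx
  -- h positive on [0,1)
  have hpos : ∀ a : ℝ, 0 ≤ a → a < 1 → 0 < h a := by
    intro a h0a h1a
    have := hanti ⟨h0a, h1a.le⟩ (Set.right_mem_Icc.mpr zero_le_one) h1a
    rwa [hz 1 le_rfl] at this
  -- floor comparison
  have key : ∀ s t : ℝ, η s = η t → ⌊s⌋ ≤ ⌊t⌋ := by
    intro s t hst
    by_contra hlt
    push_neg at hlt
    have e1 : η s ⌊t⌋ = η t ⌊t⌋ := by rw [hst]
    rw [hη, hη] at e1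
    have hc : (⌊t⌋ : ℝ) + 1 ≤ (⌊s⌋ : ℝ) := by
      exact_mod_cast Int.add_one_le_iff.mpr hlt
    have h1 : h (s - ⌊t⌋) = 0 := by
      apply hz
      have := Int.floor_le s
      linarith
    have h2 : 0 < h (t - ⌊t⌋) :=
      hpos _ (by linarith [Int.floor_le t]) (by linarith [Int.lt_floor_add_one t])
    rw [e1] at h1
    linarith
  intro s t hst
  have hfl : ⌊s⌋ = ⌊t⌋ := le_antisymm (key s t hst) (key t s hst.symm)
  have e1 : η s ⌊s⌋ = η t ⌊s⌋ := by rw [hst]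
  rw [hη, hη] at e1
  rw [hfl] at e1
  have hs1 : s - ⌊s⌋ ∈ Set.Icc (0 : ℝ) 1 :=
    ⟨by linarith [Int.floor_le s], by linarith [Int.lt_floor_add_one s]⟩
  have ht1 : t - ⌊t⌋ ∈ Set.Icc (0 : ℝ) 1 :=
    ⟨by linarith [Int.floor_le t], by linarith [Int.lt_floor_add_one t]⟩
  have := hanti.injOn hs1 ht1 (by rw [hfl]; exact e1)
  have : s - (⌊s⌋ : ℝ) = t - (⌊t⌋ : ℝ) := this
  have hfl' : (⌊s⌋ : ℝ) = (⌊t⌋ : ℝ) := by exact_mod_cast hfl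
  linarith
end

section
/- With h and η as above, set ρ₀ = min_{t∈[0,1]} √(h(t)² + h(t−1)²). Then ρ₀ > 0 and ‖η(s) − η(t)‖ ≥ ρ₀ whenever |s − t| > 3. -/
/-- With `ρ₀ = min_{t ∈ [0,1]} √(h(t)² + h(t-1)²)`, we have `ρ₀ > 0` and
`‖η(s) - η(t)‖ ≥ ρ₀` whenever `|s - t| > 3`. -/
theorem stmt9 (h : ℝ → ℝ) (hsm : ContDiff ℝ (⊤ : ℕ∞) h)
    (hsupp : tsupport h ⊆ Set.Icc (-2 : ℝ) 1)
    (hpos : ∀ t ∈ Set.Ioo (-1 : ℝ) 1, 0 < h t)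
    (η : ℝ → lp (fun _ : ℤ => ℝ) 2)
    (hη : ∀ (t : ℝ) (k : ℤ), η t k = h (t - k))
    (ρ₀ : ℝ)
    (hρ₀ : IsLeast ((fun t => Real.sqrt (h t ^ 2 + h (t - 1) ^ 2)) ''
      Set.Icc (0 : ℝ) 1) ρ₀) :
    0 < ρ₀ ∧ ∀ s t : ℝ, 3 < |s - t| → ρ₀ ≤ ‖η s - η t‖ := by
  have hzero : ∀ x : ℝ, x ∉ Set.Icc (-2 : ℝ) 1 → h x = 0 := fun x hx =>
    image_eq_zero_of_notMem_tsupport (fun hmem => hx (hsupp hmem))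
  constructor
  · obtain ⟨t₀, ht₀, heq⟩ := hρ₀.1
    rw [← heq]
    apply Real.sqrt_pos.mpr
    rcases lt_or_eq_of_le ht₀.2 with h1 | h1
    · have hp : 0 < h t₀ := hpos t₀ ⟨by linarith [ht₀.1], h1⟩
      nlinarith [sq_nonneg (h (t₀ - 1))]
    · have hp : 0 < h (t₀ - 1) := by
        have := hpos 0 ⟨by norm_num, by norm_num⟩
        simpa [h1] using this
      nlinarith [sq_nonneg (h t₀)]
  · intro s t hst
    set f := η s - η t with hf
    set k : ℤ := ⌊s⌋ with hk
    have hu0 : (0:ℝ) ≤ s - k := by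
      have := Int.floor_le s; simp only [hk]; linarith
    have hu1 : s - (k:ℝ) < 1 := by
      have := Int.lt_floor_add_one s; simp only [hk]; linarith
    have htk : h (t - k) = 0 := by
      apply hzero
      rcases lt_abs.mp hst with hc | hc
      · intro hx; have := hx.1; linarith
      · intro hx; have := hx.2; linarith
    have htk1 : h (t - ((k:ℝ) + 1)) = 0 := by
      apply hzero
      rcases lt_abs.mp hst with hc | hc
      · intro hx; have := hx.1; linarith
      · intro hx; have := hx.2; linarith
    have hfk : f k = h (s - k) := by
      have : f k = η s k - η t k := by
        rw [hf]; exact congrFun (lp.coeFn_sub (η s) (η t)) k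
      rw [this, hη, hη, htk, sub_zero]
    have hfk1 : f (k + 1) = h (s - (k:ℝ) - 1) := by
      have : f (k+1) = η s (k+1) - η t (k+1) := by
        rw [hf]; exact congrFun (lp.coeFn_sub (η s) (η t)) (k+1)
      rw [this, hη, hη]
      push_cast
      rw [show t - ((k:ℝ) + 1) = t - ((k:ℝ)+1) from rfl, htk1, sub_zero,
        sub_add_eq_sub_sub]
    -- lower bound on norm
    have hsum : ‖f k‖ ^ (2:ℝ) + ‖f (k+1)‖ ^ (2:ℝ) ≤ ‖f‖ ^ (2:ℝ) := by
      have := lp.sum_rpow_le_norm_rpow (p := 2)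
        (by norm_num) f ({k, k+1} : Finset ℤ)
      simpa [Finset.sum_pair (show k ≠ k + 1 by omega)] using this
    have h2 : ∀ x : ℝ, ‖x‖ ^ (2:ℝ) = x ^ 2 := by
      intro x
      rw [show (2:ℝ) = ((2:ℕ):ℝ) by norm_num, Real.rpow_natCast,
        Real.norm_eq_abs, sq_abs]
    have h2' : ‖f‖ ^ (2:ℝ) = ‖f‖ ^ 2 := by
      rw [show (2:ℝ) = ((2:ℕ):ℝ) by norm_num, Real.rpow_natCast]
    have hsum' : h (s - k) ^ 2 + h (s - (k:ℝ) - 1) ^ 2 ≤ ‖f‖ ^ 2 := by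
      have := hsum
      rw [h2, h2, h2', hfk, hfk1] at this
      exact this
    have hρle : ρ₀ ≤ Real.sqrt (h (s - k) ^ 2 + h (s - (k:ℝ) - 1) ^ 2) := by
      apply hρ₀.2
      exact ⟨s - k, ⟨hu0, le_of_lt hu1⟩, by norm_num⟩
    calc ρ₀ ≤ Real.sqrt (h (s - k) ^ 2 + h (s - (k:ℝ) - 1) ^ 2) := hρle
      _ ≤ Real.sqrt (‖f‖ ^ 2) := Real.sqrt_le_sqrt hsum'
      _ = ‖f‖ := Real.sqrt_sq (norm_nonneg f)
end

section
/- With h and η as above, the derivative η'(t) = ∑_{k∈ℤ} h'(t−k) e_k is nonzero for every t ∈ ℝ; more precisely, if n ∈ ℤ and t ∈ [n, n+1), then ⟨e_{n+1}, η'(t)⟩ = h'(t−n−1) ≠ 0. -/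
/-- The derivative `η'(t) = ∑_k h'(t-k) e_k` is nonzero for every `t`; more
precisely, if `t ∈ [n, n+1)` then the coordinate `⟨e_{n+1}, η'(t)⟩ = h'(t-n-1)`
is nonzero. -/
theorem stmt10 (h : ℝ → ℝ) (hsm : ContDiff ℝ (⊤ : ℕ∞) h)
    (hsupp : tsupport h ⊆ Set.Icc (-2 : ℝ) 1) (h0 : h 0 = 1)
    (hderiv_pos : ∀ t ∈ Set.Ico (-1 : ℝ) 0, 0 < deriv h t)
    (hderiv_neg : ∀ t ∈ Set.Ioo (0 : ℝ) 1, deriv h t < 0)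
    (hderiv0 : deriv h 0 = 0)
    (η η' : ℝ → lp (fun _ : ℤ => ℝ) 2)
    (hη : ∀ (t : ℝ) (k : ℤ), η t k = h (t - k))
    (hηd : ∀ t : ℝ, HasDerivAt η (η' t) t)
    (hη' : ∀ (t : ℝ) (k : ℤ), η' t k = deriv h (t - k)) :
    ∀ (n : ℤ), ∀ t ∈ Set.Ico (n : ℝ) (n + 1),
      η' t (n + 1) = deriv h (t - n - 1) ∧ deriv h (t - n - 1) ≠ 0 ∧
      η' t ≠ 0 := by
  intro n t ht
  have hco : η' t (n + 1) = deriv h (t - n - 1) := by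
    rw [hη' t (n + 1)]; push_cast; ring_nf
  have hmem : t - n - 1 ∈ Set.Ico (-1 : ℝ) 0 := by
    constructor <;> [linarith [ht.1]; linarith [ht.2]]
  have hpos := hderiv_pos _ hmem
  refine ⟨hco, ne_of_gt hpos, fun hz => ?_⟩
  have : η' t (n + 1) = 0 := by rw [hz]; rfl
  rw [hco] at this; linarith
end

section
/- With h and η as above, η'(0) = h'(−1)·e₁ with h'(−1) > 0, and for every t ∈ ℝ the unit vector η'(t)/‖η'(t)‖ is never equal to −η'(0)/‖η'(0)‖; i.e., η'(t) is never a negative real multiple of e₁. -/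
/-- `η'(0) = h'(-1) • e₁` with `h'(-1) > 0`, and the unit tangent
`η'(t)/‖η'(t)‖` is never equal to `-η'(0)/‖η'(0)‖`. -/
theorem stmt11 (h : ℝ → ℝ) (hsm : ContDiff ℝ (⊤ : ℕ∞) h)
    (hsupp : tsupport h ⊆ Set.Icc (-2 : ℝ) 1)
    (hm2 : h (-2) = 0) (hm1 : h (-1) = 0) (h1 : h 1 = 0) (h0 : h 0 = 1)
    (hderiv_pos : ∀ t ∈ Set.Ico (-1 : ℝ) 0, 0 < deriv h t)
    (hderiv_neg : ∀ t ∈ Set.Ioo (0 : ℝ) 1, deriv h t < 0)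
    (hderiv0 : deriv h 0 = 0)
    (η η' : ℝ → lp (fun _ : ℤ => ℝ) 2)
    (hη : ∀ (t : ℝ) (k : ℤ), η t k = h (t - k))
    (hηd : ∀ t : ℝ, HasDerivAt η (η' t) t)
    (hη' : ∀ (t : ℝ) (k : ℤ), η' t k = deriv h (t - k)) :
    η' 0 = deriv h (-1) • lp.single 2 (1 : ℤ) (1 : ℝ) ∧
    0 < deriv h (-1) ∧
    ∀ t : ℝ, ‖η' t‖⁻¹ • η' t ≠ -(‖η' 0‖⁻¹ • η' 0) := by
  -- deriv h vanishes outside the open interval (-2, 1)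
  have hdcont : Continuous (deriv h) := hsm.continuous_deriv (by simp)
  have hout : ∀ s : ℝ, s ∉ Set.Icc (-2 : ℝ) 1 → deriv h s = 0 := by
    intro s hs
    by_contra hne
    exact hs (hsupp (support_deriv_subset (by simpa using hne)))
  have hderiv1 : deriv h 1 = 0 := by
    have h1 : Filter.Tendsto (deriv h) (nhdsWithin 1 (Set.Ioi 1)) (nhds (deriv h 1)) :=
      (hdcont.continuousAt).continuousWithinAt
    have h2 : Filter.Tendsto (deriv h) (nhdsWithin 1 (Set.Ioi 1)) (nhds 0) := by
      refine Filter.Tendsto.congr' ?_ tendsto_const_nhds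
      filter_upwards [self_mem_nhdsWithin] with s hs
      exact (hout s (fun hmem => absurd hmem.2 (not_le.mpr hs))).symm
    exact tendsto_nhds_unique h1 h2
  have hderivm2 : deriv h (-2) = 0 := by
    have h1 : Filter.Tendsto (deriv h) (nhdsWithin (-2) (Set.Iio (-2))) (nhds (deriv h (-2))) :=
      (hdcont.continuousAt).continuousWithinAt
    have h2 : Filter.Tendsto (deriv h) (nhdsWithin (-2) (Set.Iio (-2))) (nhds 0) := by
      refine Filter.Tendsto.congr' ?_ tendsto_const_nhds
      filter_upwards [self_mem_nhdsWithin] with s hs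
      exact (hout s (fun hmem => absurd hmem.1 (not_le.mpr hs))).symm
    exact tendsto_nhds_unique h1 h2
  have hpos : 0 < deriv h (-1) := hderiv_pos (-1) ⟨le_refl _, by norm_num⟩
  have hout' : ∀ s : ℝ, s ∉ Set.Ioo (-2 : ℝ) 1 → deriv h s = 0 := by
    intro s hs
    by_cases he1 : s = -2
    · rw [he1]; exact hderivm2
    by_cases he2 : s = 1
    · rw [he2]; exact hderiv1
    apply hout
    intro hmem
    exact hs ⟨lt_of_le_of_ne hmem.1 (Ne.symm he1), lt_of_le_of_ne hmem.2 he2⟩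
  -- deriv h s < 0 only possible on (-2,-1) ∪ (0,1)
  have hneg_loc : ∀ s : ℝ, deriv h s < 0 →
      (s ∈ Set.Ioo (-2 : ℝ) (-1)) ∨ (s ∈ Set.Ioo (0 : ℝ) 1) := by
    intro s hs
    by_contra hcon
    push_neg at hcon
    obtain ⟨hc1, hc2⟩ := hcon
    rcases le_or_gt s (-2) with hle | hgt
    · rcases eq_or_lt_of_le hle with heq | hlt
      · rw [heq] at hs; linarith [hderivm2 ▸ hs]
      · exact absurd (hout s (fun hm => absurd hm.1 (not_le.mpr hlt))) (ne_of_lt hs)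
    rcases lt_or_ge s (-1) with hlt1 | hge1
    · exact hc1 ⟨hgt, hlt1⟩
    rcases lt_or_ge s 0 with hlt0 | hge0
    · linarith [hderiv_pos s ⟨hge1, hlt0⟩]
    rcases eq_or_lt_of_le hge0 with heq0 | hgt0
    · rw [← heq0] at hs; linarith [hderiv0 ▸ hs]
    rcases lt_or_ge s 1 with hlt1' | hge1'
    · exact hc2 ⟨hgt0, hlt1'⟩
    rcases eq_or_lt_of_le hge1' with heq1 | hgt1
    · rw [← heq1] at hs; linarith [hderiv1 ▸ hs]
    · exact absurd (hout s (fun hm => absurd hm.2 (not_le.mpr hgt1))) (ne_of_lt hs)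
  -- Part 1
  have part1 : η' 0 = deriv h (-1) • lp.single 2 (1 : ℤ) (1 : ℝ) := by
    apply lp.ext
    funext k
    rw [lp.coeFn_smul, Pi.smul_apply, hη' 0 k]
    by_cases hk : k = 1
    · subst hk
      rw [lp.single_apply_self]
      norm_num
    · rw [lp.single_apply_ne 2 _ _ hk, smul_zero]
      by_cases hk0 : k = 0
      · subst hk0; simpa using hderiv0
      · apply hout'
        intro hmem
        have h1 : (-2 : ℝ) < 0 - (k : ℝ) := hmem.1
        have h2 : (0 : ℝ) - (k : ℝ) < 1 := hmem.2
        have hk1 : (-1 : ℤ) < k := by exact_mod_cast (by linarith : (-1 : ℝ) < (k : ℝ))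
        have hk2 : k < 2 := by exact_mod_cast (by linarith : (k : ℝ) < 2)
        omega
  refine ⟨part1, hpos, ?_⟩
  intro t heq
  have hcoord : ∀ k : ℤ, ‖η' t‖⁻¹ * deriv h (t - k) = -(‖η' 0‖⁻¹ * deriv h (0 - k)) := by
    intro k
    have := congrArg (fun v : lp (fun _ : ℤ => ℝ) 2 => v k) heq
    have h2 : (-(‖η' 0‖⁻¹ • η' 0)) k = -(‖η' 0‖⁻¹ * (η' 0) k) := rfl
    rw [h2] at this
    simpa [lp.coeFn_smul, lp.coeFn_neg, hη', Pi.neg_apply, Pi.smul_apply, smul_eq_mul] using this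
  have hnorm0 : 0 < ‖η' 0‖ := by
    rw [norm_pos_iff]
    intro hz
    have : (η' 0) 1 = 0 := by rw [hz]; rfl
    rw [hη'] at this
    norm_num at this
    linarith
  have hd0inv : 0 < ‖η' 0‖⁻¹ := inv_pos.mpr hnorm0
  have hk1 := hcoord 1
  norm_num at hk1
  have hrhs_neg : ‖η' t‖⁻¹ * deriv h (t - 1) < 0 := by
    rw [hk1]; nlinarith
  have hct : 0 < ‖η' t‖⁻¹ := by
    rcases (inv_nonneg.mpr (norm_nonneg (η' t))).lt_or_eq with h | h
    · exact h
    · rw [← h] at hrhs_neg; simp at hrhs_neg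
  have hdneg : deriv h (t - 1) < 0 := by nlinarith
  rcases hneg_loc _ hdneg with hmem | hmem
  · -- t ∈ (-1, 0)
    have ht : t ∈ Set.Ico (-1 : ℝ) 0 := ⟨by linarith [hmem.1], by linarith [hmem.2]⟩
    have hk0 := hcoord 0
    norm_num [hderiv0] at hk0
    have hpt := hderiv_pos t ht
    rcases hk0 with hz | hz
    · rw [hz] at hct; simp at hct
    · linarith
  · -- t ∈ (1, 2)
    have hk2 := hcoord 2
    norm_num [hderivm2] at hk2
    have ht2 : t - 2 ∈ Set.Ico (-1 : ℝ) 0 := ⟨by linarith [hmem.1], by linarith [hmem.2]⟩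
    have hpt := hderiv_pos _ ht2
    rcases hk2 with hz | hz
    · rw [hz] at hct; simp at hct
    · linarith
end

section
/- With h and η as above, η(n) = e_n for every n ∈ ℤ, and consequently η has infinite arc length: for every L > 0 there exist finitely many points t_0 < t_1 < ... < t_m with ∑_{i=1}^{m} ‖η(t_i) − η(t_{i−1})‖ > L. -/
/-- `η(n) = e_n` for every `n ∈ ℤ`, and consequently `η` has infinite arc
length: for every `L > 0` there are finitely many points
`t 0 < t 1 < ⋯ < t m` with `∑ ‖η(t (i+1)) - η(t i)‖ > L`. -/
theorem stmt13 (h : ℝ → ℝ) (hsm : ContDiff ℝ (⊤ : ℕ∞) h)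
    (hsupp : tsupport h ⊆ Set.Icc (-2 : ℝ) 1)
    (hm2 : h (-2) = 0) (hm1 : h (-1) = 0) (h1 : h 1 = 0) (h0 : h 0 = 1)
    (η : ℝ → lp (fun _ : ℤ => ℝ) 2)
    (hη : ∀ (t : ℝ) (k : ℤ), η t k = h (t - k)) :
    (∀ n : ℤ, η (n : ℝ) = lp.single 2 n (1 : ℝ)) ∧
    ∀ L > (0 : ℝ), ∃ (m : ℕ) (t : ℕ → ℝ), StrictMono t ∧
      L < ∑ i ∈ Finset.range m, ‖η (t (i + 1)) - η (t i)‖ := by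
  -- h vanishes at all nonzero integers
  have hz : ∀ j : ℤ, j ≠ 0 → h (j : ℝ) = 0 := by
    intro j hj
    by_cases hmem : (j : ℝ) ∈ Set.Icc (-2 : ℝ) 1
    · have h2 : (-2 : ℤ) ≤ j ∧ j ≤ 1 := by
        constructor
        · exact_mod_cast hmem.1
        · exact_mod_cast hmem.2
      have : j = -2 ∨ j = -1 ∨ j = 1 := by omega
      rcases this with rfl | rfl | rfl
      · exact_mod_cast hm2
      · exact_mod_cast hm1
      · exact_mod_cast h1
    · exact image_eq_zero_of_notMem_tsupport (fun hmem' => hmem (hsupp hmem'))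
  have key : ∀ n : ℤ, η (n : ℝ) = lp.single 2 n (1 : ℝ) := by
    intro n
    apply lp.ext
    funext k
    rw [hη]
    by_cases hk : k = n
    · subst hk
      simp only [sub_self, h0]
      rw [lp.single_apply, Pi.single_eq_same]
    · rw [lp.single_apply, Pi.single_eq_of_ne hk]
      have : ((n : ℝ) - k) = ((n - k : ℤ) : ℝ) := by push_cast; ring
      rw [this]
      exact hz _ (sub_ne_zero.mpr (fun hc => hk hc.symm))
  refine ⟨key, fun L hL => ?_⟩
  refine ⟨⌈L⌉₊ + 1, fun i => (i : ℝ), ?_, ?_⟩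
  · intro a b hab
    simp only []
    exact_mod_cast hab
  · have hterm : ∀ i : ℕ, (1 : ℝ) ≤ ‖η ((i + 1 : ℕ) : ℝ) - η (i : ℝ)‖ := by
      intro i
      have hc : ‖(η ((i + 1 : ℕ) : ℝ) - η (i : ℝ)) ((i + 1 : ℕ) : ℤ)‖ ≤
          ‖η ((i + 1 : ℕ) : ℝ) - η (i : ℝ)‖ :=
        lp.norm_apply_le_norm two_ne_zero _ _
      have hval : (η ((i + 1 : ℕ) : ℝ) - η (i : ℝ)) ((i + 1 : ℕ) : ℤ) = 1 := by
        have := lp.coeFn_sub (η ((i + 1 : ℕ) : ℝ)) (η (i : ℝ))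
        rw [show ((η ((i + 1 : ℕ) : ℝ) - η (i : ℝ)) ((i + 1 : ℕ) : ℤ))
            = η ((i + 1 : ℕ) : ℝ) ((i + 1 : ℕ) : ℤ) - η (i : ℝ) ((i + 1 : ℕ) : ℤ) from by
          rw [this]; rfl]
        rw [hη, hη]
        have e1 : ((i + 1 : ℕ) : ℝ) - (((i + 1 : ℕ) : ℤ) : ℝ) = 0 := by push_cast; ring
        have e2 : ((i : ℕ) : ℝ) - (((i + 1 : ℕ) : ℤ) : ℝ) = -1 := by push_cast; ring
        rw [e1, e2, h0, hm1, sub_zero]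
      rw [hval] at hc
      simpa using hc
    calc L < (⌈L⌉₊ + 1 : ℕ) := by
            have := Nat.le_ceil L
            push_cast
            linarith
      _ = ∑ i ∈ Finset.range (⌈L⌉₊ + 1), (1 : ℝ) := by simp
      _ ≤ ∑ i ∈ Finset.range (⌈L⌉₊ + 1), ‖η (((i : ℕ) + 1 : ℝ)) - η ((i : ℕ) : ℝ)‖ := by
            apply Finset.sum_le_sum
            intro i _
            have := hterm i
            push_cast at this ⊢
            convert this using 3
      _ = ∑ i ∈ Finset.range (⌈L⌉₊ + 1), ‖η (((i + 1 : ℕ) : ℝ)) - η ((i : ℕ) : ℝ)‖ := by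
            push_cast; rfl
end

section
/- Let H be a real Hilbert space, η : ℝ → H a smooth curve with η'(t) ≠ 0 for all t, and H₀ = {η'(0)}^⊥. For each t let R_t be the rotation (as in the explicit Hilbert space rotation formula) taking η'(0)/‖η'(0)‖ to η'(t)/‖η'(t)‖, assumed well defined (η'(t)/‖η'(t)‖ ≠ −η'(0)/‖η'(0)‖ for all t), and define Φ : ℝ × H₀ → H by Φ(t,x) = η(t) + R_t(x). Then the Fréchet derivative of Φ at a point (t₀, 0) is the linear map (t, x) ↦ t·η'(t₀) + R_{t₀}(x), and this linear map is a continuous linear bijection from ℝ × H₀ onto H. -/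
open scoped RealInnerProductSpace

/-- The rotation of a real Hilbert space taking the unit vector `v` to the
unit vector `w ≠ -v` (fixing the orthogonal complement of `v, w`). -/
noncomputable def rot {H : Type*} [NormedAddCommGroup H]
    [InnerProductSpace ℝ H] (v w x : H) : H :=
  x + (((2 * ⟪v, w⟫ + 1) * ⟪x, v⟫ - ⟪x, w⟫) / (1 + ⟪v, w⟫)) • w
    - (⟪x, v + w⟫ / (1 + ⟪v, w⟫)) • v

lemma aux_den {H : Type*} [NormedAddCommGroup H] [InnerProductSpace ℝ H] {v w : H}
    (hv : ‖v‖ = 1) (hw : ‖w‖ = 1) (hne : w ≠ -v) : 0 < 1 + ⟪v, w⟫ := by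
  have h : v + w ≠ 0 := fun h => hne (by rw [eq_neg_iff_add_eq_zero, add_comm]; exact h)
  have h2 : 0 < ‖v + w‖ ^ 2 := by have := norm_pos_iff.mpr h; positivity
  rw [norm_add_sq_real, hv, hw] at h2
  nlinarith


set_option maxHeartbeats 1000000 in
/-- For the tube map `Φ(t,x) = η(t) + R_t(x)` on `ℝ × H₀`, where
`H₀ = {η'(0)}^⊥` and `R_t` rotates `η'(0)/‖η'(0)‖` to `η'(t)/‖η'(t)‖`, the
Fréchet derivative of `Φ` at `(t₀, 0)` is the continuous linear map
`(t, x) ↦ t • η'(t₀) + R_{t₀}(x)`, and this map is a bijection onto `H`. -/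
theorem stmt17 {H : Type*} [NormedAddCommGroup H] [InnerProductSpace ℝ H]
    [CompleteSpace H] (η η' : ℝ → H) (hsm : ContDiff ℝ (⊤ : ℕ∞) η)
    (hηd : ∀ t : ℝ, HasDerivAt η (η' t) t)
    (hne : ∀ t : ℝ, η' t ≠ 0)
    (hnot : ∀ t : ℝ, ‖η' t‖⁻¹ • η' t ≠ -(‖η' 0‖⁻¹ • η' 0))
    (K : Submodule ℝ H) (hK : K = (Submodule.span ℝ {η' 0})ᗮ)
    (Φ : ℝ × K → H)
    (hΦ : ∀ p : ℝ × K,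
      Φ p = η p.1 + rot (‖η' 0‖⁻¹ • η' 0) (‖η' p.1‖⁻¹ • η' p.1) (p.2 : H))
    (t₀ : ℝ) :
    ∃ L : ℝ × K →L[ℝ] H,
      (∀ (t : ℝ) (x : K),
        L (t, x) = t • η' t₀
          + rot (‖η' 0‖⁻¹ • η' 0) (‖η' t₀‖⁻¹ • η' t₀) (x : H)) ∧
      HasFDerivAt Φ L (t₀, (0 : K)) ∧ Function.Bijective L := by
  have h0 := hne 0
  have ht := hne t₀
  set v₀ : H := ‖η' 0‖⁻¹ • η' 0 with hv₀def
  set w : H := ‖η' t₀‖⁻¹ • η' t₀ with hwdef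
  have hv₀1 : ‖v₀‖ = 1 := norm_smul_inv_norm h0
  have hw1 : ‖w‖ = 1 := norm_smul_inv_norm ht
  have hvv : ⟪v₀, v₀⟫ = 1 := by rw [real_inner_self_eq_norm_sq, hv₀1]; norm_num
  have hww : ⟪w, w⟫ = 1 := by rw [real_inner_self_eq_norm_sq, hw1]; norm_num
  set c : ℝ := ⟪v₀, w⟫ with hcdef
  have hden : 0 < 1 + c := aux_den hv₀1 hw1 (hnot t₀)
  have hden' : (1 : ℝ) + c ≠ 0 := ne_of_gt hden
  have hwv : ⟪w, v₀⟫ = c := by rw [real_inner_comm]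
  have hKmem : ∀ x : H, x ∈ K ↔ ⟪v₀, x⟫ = 0 := by
    intro x
    rw [hK, Submodule.mem_orthogonal_singleton_iff_inner_right]
    have hn : (‖η' 0‖ : ℝ)⁻¹ ≠ 0 := inv_ne_zero (norm_ne_zero_iff.2 h0)
    rw [hv₀def, real_inner_smul_left]
    constructor
    · intro h; rw [h, mul_zero]
    · intro h; exact (mul_eq_zero.mp h).resolve_left hn
  -- the linear map
  set A : H →L[ℝ] H := ContinuousLinearMap.id ℝ H
    + (((2 * c + 1) / (1 + c)) • innerSL ℝ v₀ - ((1 : ℝ) / (1 + c)) • innerSL ℝ w).smulRight w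
    - (((1 : ℝ) / (1 + c)) • innerSL ℝ (v₀ + w)).smulRight v₀ with hAdef
  have hA : ∀ x : H, A x = rot v₀ w x := by
    intro x
    simp only [hAdef, rot, ContinuousLinearMap.sub_apply, ContinuousLinearMap.add_apply,
      ContinuousLinearMap.smulRight_apply, ContinuousLinearMap.smul_apply, innerSL_apply_apply,
      ContinuousLinearMap.id_apply, smul_eq_mul]
    rw [real_inner_comm x v₀, real_inner_comm x w, real_inner_comm x (v₀ + w), ← hcdef]
    match_scalars <;> field_simp <;> ring
  set L : ℝ × K →L[ℝ] H := (ContinuousLinearMap.fst ℝ ℝ K).smulRight (η' t₀)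
    + A.comp ((K.subtypeL).comp (ContinuousLinearMap.snd ℝ ℝ K)) with hLdef
  have hLapp : ∀ (t : ℝ) (x : K), L (t, x) = t • η' t₀ + rot v₀ w (x : H) := by
    intro t x
    rw [hLdef]
    simp only [ContinuousLinearMap.add_apply, ContinuousLinearMap.smulRight_apply,
      ContinuousLinearMap.coe_fst', ContinuousLinearMap.coe_comp', Function.comp_apply,
      ContinuousLinearMap.coe_snd', Submodule.coe_subtypeL', Submodule.coe_subtype]
    rw [hA]
  refine ⟨L, hLapp, ?_, ?_⟩
  · -- derivative
    have hΦeq : Φ = fun p : ℝ × K => η p.1 + rot v₀ (‖η' p.1‖⁻¹ • η' p.1) (p.2 : H) :=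
      funext hΦ
    rw [hΦeq]
    simp only [rot, div_eq_mul_inv]
    have hη'c : ContDiff ℝ (⊤ : ℕ∞) η' := by
      have hd : η' = deriv η := funext fun s => ((hηd s).deriv).symm
      rw [hd]
      exact (contDiff_infty_iff_deriv.mp (hsm.of_le (by simp))).2
    have hη'd : DifferentiableAt ℝ η' t₀ := (hη'c.differentiable (by simp)).differentiableAt
    have hVd : DifferentiableAt ℝ (fun s => ‖η' s‖⁻¹ • η' s) t₀ :=
      ((hη'd.norm ℝ ht).inv (norm_ne_zero_iff.2 ht)).smul hη'd
    obtain ⟨v', hv'⟩ : ∃ dv, HasDerivAt (fun s => ‖η' s‖⁻¹ • η' s) dv t₀ :=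
      ⟨_, hVd.hasDerivAt⟩
    have hfst : HasFDerivAt (Prod.fst : ℝ × K → ℝ) (ContinuousLinearMap.fst ℝ ℝ K)
        (t₀, (0 : K)) := hasFDerivAt_fst
    have hV : HasFDerivAt (fun p : ℝ × K => ‖η' p.1‖⁻¹ • η' p.1)
        ((ContinuousLinearMap.smulRight (1 : ℝ →L[ℝ] ℝ) v').comp
          (ContinuousLinearMap.fst ℝ ℝ K)) (t₀, (0 : K)) :=
      by have := (hv'.hasFDerivAt).comp (t₀, (0 : K)) hfst; exact this
    have hη : HasFDerivAt (fun p : ℝ × K => η p.1)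
        ((ContinuousLinearMap.smulRight (1 : ℝ →L[ℝ] ℝ) (η' t₀)).comp
          (ContinuousLinearMap.fst ℝ ℝ K)) (t₀, (0 : K)) :=
      ((hηd t₀).hasFDerivAt).comp _ hfst
    have hx : HasFDerivAt (fun p : ℝ × K => (p.2 : H))
        ((K.subtypeL).comp (ContinuousLinearMap.snd ℝ ℝ K)) (t₀, (0 : K)) :=
      ((K.subtypeL).comp (ContinuousLinearMap.snd ℝ ℝ K)).hasFDerivAt
    have h1 := (hasFDerivAt_const v₀ ((t₀ : ℝ), (0 : K))).inner ℝ hV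
    have h2 := hx.inner ℝ (hasFDerivAt_const v₀ ((t₀ : ℝ), (0 : K)))
    have h3 := hx.inner ℝ hV
    have h4 := hx.inner ℝ ((hasFDerivAt_const v₀ ((t₀ : ℝ), (0 : K))).add hV)
    have hdeninv : HasDerivAt (fun s : ℝ => s⁻¹) (-((1 + c) ^ 2)⁻¹)
        ((fun p : ℝ × K => 1 + ⟪v₀, ‖η' p.1‖⁻¹ • η' p.1⟫) (t₀, (0 : K))) :=
      hasDerivAt_inv hden'
    have hinv := hdeninv.comp_hasFDerivAt ((t₀ : ℝ), (0 : K)) (h1.const_add 1)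
    refine HasFDerivAt.congr_fderiv
      (hη.add
        ((hx.add
          ((((((h1.const_mul 2).add_const 1).mul h2).sub h3).mul hinv).smul hV)).sub
          ((h4.mul hinv).smul (hasFDerivAt_const v₀ ((t₀ : ℝ), (0 : K))))))
      ?_
    refine ContinuousLinearMap.ext fun q => ?_
    obtain ⟨s, y⟩ := q
    simp only [hLdef, hAdef, ContinuousLinearMap.add_apply, ContinuousLinearMap.sub_apply,
      ContinuousLinearMap.coe_comp', Function.comp_apply, ContinuousLinearMap.coe_fst',
      ContinuousLinearMap.coe_snd', ContinuousLinearMap.smulRight_apply,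
      ContinuousLinearMap.one_apply, ContinuousLinearMap.coe_smul', Pi.smul_apply,
      ContinuousLinearMap.smul_apply, ContinuousLinearMap.prod_apply,
      ContinuousLinearMap.zero_apply, ContinuousLinearMap.id_apply, innerSL_apply_apply,
      fderivInnerCLM_apply, Submodule.coe_subtypeL', Submodule.coe_subtype,
      ZeroMemClass.coe_zero, inner_zero_left, inner_zero_right, smul_eq_mul,
      Pi.add_apply, Pi.mul_apply, Pi.sub_apply]
    rw [← hwdef, ← hcdef, real_inner_comm v₀ (y : H), real_inner_comm w (y : H),
      real_inner_comm (v₀ + w) (y : H)]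
    match_scalars <;> field_simp <;> ring
  · constructor
    · -- injective
      have key : ∀ p : ℝ × K, L p = 0 → p = 0 := by
        rintro ⟨t, x⟩ h
        rw [hLapp] at h
        have hx0 : ⟪v₀, (x : H)⟫ = 0 := (hKmem x).1 x.2
        have hx0' : ⟪(x : H), v₀⟫ = 0 := by rw [real_inner_comm]; exact hx0
        have hrw : ⟪w, rot v₀ w (x : H)⟫ = 0 := by
          simp only [rot, inner_add_right, inner_sub_right, real_inner_smul_right, hww, hwv,
            hx0', ← hcdef]
          rw [real_inner_comm w (x : H)]
          field_simp
          ring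
        have hwu : ⟪w, η' t₀⟫ = ‖η' t₀‖ := by
          rw [hwdef, real_inner_smul_left, real_inner_self_eq_norm_sq]
          rw [pow_two, ← mul_assoc, inv_mul_cancel₀ (norm_ne_zero_iff.2 ht), one_mul]
        have h1 : t * ‖η' t₀‖ = 0 := by
          have h1' := congrArg (fun z => ⟪w, z⟫) h
          simpa [inner_add_right, real_inner_smul_right, hrw, hwu] using h1'
        have ht0 : t = 0 := by
          rcases mul_eq_zero.mp h1 with h' | h'
          · exact h'
          · exact absurd h' (norm_ne_zero_iff.2 ht)
        have h2 : rot v₀ w (x : H) = 0 := by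
          rw [ht0, zero_smul, zero_add] at h
          exact h
        have h3 : ⟪(x : H), w⟫ = 0 := by
          have h3' := congrArg (fun z => ⟪v₀, z⟫) h2
          simp only [rot, inner_add_right, inner_sub_right, real_inner_smul_right, hvv,
            ← hcdef, hx0, hx0', inner_zero_right] at h3'
          have hcc : (1 : ℝ) + c ≠ 0 := hden'
          field_simp at h3'
          have h3'' : ⟪(x : H), w⟫ * ((1 + c) * (1 + c)) = 0 := by linear_combination -(1 + c) * h3'
          exact (mul_eq_zero.mp h3'').resolve_right (mul_ne_zero hcc hcc)
        have h4 : (x : H) = 0 := by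
          have := h2
          simp only [rot, hx0', h3, inner_add_right] at this
          simpa using this
        have h5 : x = 0 := Subtype.ext h4
        simp [ht0, h5, Prod.ext_iff]
      intro a b hab
      have h0' : L (a - b) = 0 := by rw [map_sub, hab, sub_self]
      have := key (a - b) h0'
      exact sub_eq_zero.mp this
    · -- surjective
      intro z
      set t : ℝ := ⟪η' t₀, z⟫ / ‖η' t₀‖ ^ 2 with htdef
      set z' : H := z - t • η' t₀ with hz'def
      have hnn : ‖η' t₀‖ ≠ 0 := norm_ne_zero_iff.2 ht
      have hz'u : ⟪η' t₀, z'⟫ = 0 := by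
        rw [hz'def, inner_sub_right, real_inner_smul_right, real_inner_self_eq_norm_sq, htdef]
        field_simp
        ring
      have hwz' : ⟪w, z'⟫ = 0 := by
        rw [hwdef, real_inner_smul_left, hz'u, mul_zero]
      have hz'w : ⟪z', w⟫ = 0 := by rw [real_inner_comm]; exact hwz'
      set d : ℝ := ⟪v₀, z'⟫ with hddef
      set x : H := z' - (d / (1 + c)) • (v₀ + w) with hxdef
      have hxv₀ : ⟪v₀, x⟫ = 0 := by
        rw [hxdef, inner_sub_right, real_inner_smul_right, inner_add_right, hvv, ← hddef,
          ← hcdef]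
        field_simp
        ring
      have hxv₀' : ⟪x, v₀⟫ = 0 := by rw [real_inner_comm]; exact hxv₀
      have hxw : ⟪x, w⟫ = -d := by
        rw [real_inner_comm, hxdef, inner_sub_right, real_inner_smul_right, inner_add_right,
          hwv, hww, hwz']
        field_simp
        ring
      have hrot : rot v₀ w x = z' := by
        simp only [rot, hxv₀', hxw, inner_add_right, ← hcdef]
        rw [hxdef]
        match_scalars <;> field_simp <;> ring
      refine ⟨(t, ⟨x, (hKmem x).2 hxv₀⟩), ?_⟩
      rw [hLapp, hrot, hz'def]
      module
end

section
/- Let η : ℝ → ℓ²(ℤ) be the curve η(t) = ∑_{k∈ℤ} h(t−k)e_k as above, and let p ∈ ℓ²(ℤ) with d_{η(ℝ)}(p) < ρ₀, where ρ₀ = min_{t∈[0,1]} √(h(t)²+h(t−1)²) > 0. Then the infimum distance from p to the image η(ℝ) is attained: there exists s ∈ ℝ with ‖η(s) − p‖ = d_{η(ℝ)}(p) = inf_{t∈ℝ} ‖η(t) − p‖. -/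
/-- Reverse triangle inequality for the Euclidean norm on `ℝ²`, via `ℂ`. -/
lemma sqrt_tri_aux (a b c d : ℝ) :
    Real.sqrt (a ^ 2 + b ^ 2) ≤
      Real.sqrt ((a - c) ^ 2 + (b - d) ^ 2) + Real.sqrt (c ^ 2 + d ^ 2) := by
  have key : ∀ x y : ℝ, Real.sqrt (x ^ 2 + y ^ 2) = ‖(⟨x, y⟩ : ℂ)‖ := by
    intro x y
    rw [Complex.norm_def, Complex.normSq_mk]
    ring_nf
  rw [key a b, key (a - c) (b - d), key c d]
  have : (⟨a, b⟩ : ℂ) = ⟨a - c, b - d⟩ + ⟨c, d⟩ := by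
    apply Complex.ext <;> simp
  rw [this]
  exact norm_add_le _ _

/-- If `p ∈ ℓ²(ℤ)` has distance `< ρ₀` to the image of the curve `η`, then the
infimum distance from `p` to `η(ℝ)` is attained at some `s ∈ ℝ`. -/
theorem stmt18 (h : ℝ → ℝ) (hsm : ContDiff ℝ (⊤ : ℕ∞) h)
    (hsupp : tsupport h ⊆ Set.Icc (-2 : ℝ) 1)
    (hpos : ∀ t ∈ Set.Ioo (-1 : ℝ) 1, 0 < h t) (h0 : h 0 = 1)
    (η : ℝ → lp (fun _ : ℤ => ℝ) 2)
    (hη : ∀ (t : ℝ) (k : ℤ), η t k = h (t - k))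
    (ρ₀ : ℝ)
    (hρ₀ : IsLeast ((fun t => Real.sqrt (h t ^ 2 + h (t - 1) ^ 2)) ''
      Set.Icc (0 : ℝ) 1) ρ₀)
    (p : lp (fun _ : ℤ => ℝ) 2)
    (hp : Metric.infDist p (Set.range η) < ρ₀) :
    ∃ s : ℝ, ‖η s - p‖ = Metric.infDist p (Set.range η) := by
  classical
  have h2 : ((2 : ENNReal)).toReal = ((2 : ℕ) : ℝ) := by norm_num
  have h2pos : (0 : ℝ) < ((2 : ENNReal)).toReal := by rw [h2]; norm_num
  -- basic ℓ² facts, in `^ 2` form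
  have key1 : ∀ q : lp (fun _ : ℤ => ℝ) 2, ‖q‖ ^ 2 = ∑' k : ℤ, (q k) ^ 2 := by
    intro q
    have := lp.norm_rpow_eq_tsum h2pos q
    simp only [h2, Real.rpow_natCast, Real.norm_eq_abs, sq_abs] at this
    exact this
  have key2 : ∀ q : lp (fun _ : ℤ => ℝ) 2, Summable fun k : ℤ => (q k) ^ 2 := by
    intro q
    have := (lp.memℓp q).summable h2pos
    simpa only [h2, Real.rpow_natCast, Real.norm_eq_abs, sq_abs] using this
  have key3 : ∀ (q : lp (fun _ : ℤ => ℝ) 2) (s : Finset ℤ),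
      ∑ k ∈ s, (q k) ^ 2 ≤ ‖q‖ ^ 2 := by
    intro q s
    have := lp.sum_rpow_le_norm_rpow h2pos q s
    simpa only [h2, Real.rpow_natCast, Real.norm_eq_abs, sq_abs] using this
  -- bound on h
  have hcs : HasCompactSupport h :=
    isCompact_Icc.of_isClosed_subset (isClosed_tsupport h) hsupp
  obtain ⟨C, hC⟩ := hcs.exists_bound_of_continuous hsm.continuous
  have hzero : ∀ x : ℝ, x < -2 ∨ 1 < x → h x = 0 := by
    intro x hx
    apply image_eq_zero_of_notMem_tsupport
    intro hmem
    have := hsupp hmem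
    rw [Set.mem_Icc] at this
    rcases hx with h' | h' <;> linarith [this.1, this.2]
  -- the squared distance function
  set F : ℝ → ℝ := fun t => ∑' k : ℤ, (h (t - k) - p k) ^ 2 with hFdef
  have hface : ∀ t : ℝ, ‖η t - p‖ ^ 2 = F t := by
    intro t
    rw [key1 (η t - p)]
    apply tsum_congr
    intro k
    simp [lp.coeFn_sub, Pi.sub_apply, hη]
  have hnorm_eq : ∀ t : ℝ, ‖η t - p‖ = Real.sqrt (F t) := by
    intro t
    rw [← hface t, Real.sqrt_sq (norm_nonneg _)]
  -- continuity of F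
  have hFc : Continuous F := by
    rw [continuous_iff_continuousAt]
    intro t₀
    have hsub : Set.Icc (t₀ - 1) (t₀ + 1) ∈ nhds t₀ :=
      Icc_mem_nhds (by linarith) (by linarith)
    apply ContinuousOn.continuousAt _ hsub
    apply continuousOn_tsum
      (u := fun k : ℤ =>
        (if k ∈ Finset.Icc ⌈t₀ - 3⌉ ⌊t₀ + 3⌋ then 2 * C ^ 2 else 0) + 2 * (p k) ^ 2)
    · intro k
      exact (((hsm.continuous.comp (continuous_id.sub continuous_const)).sub
        continuous_const).pow 2).continuousOn
    · apply Summable.add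
      · apply summable_of_ne_finset_zero (s := Finset.Icc ⌈t₀ - 3⌉ ⌊t₀ + 3⌋)
        intro k hk
        exact if_neg hk
      · exact (key2 p).mul_left 2
    · intro k t ht
      rw [Set.mem_Icc] at ht
      rw [Real.norm_eq_abs, abs_of_nonneg (sq_nonneg _)]
      by_cases hk : k ∈ Finset.Icc ⌈t₀ - 3⌉ ⌊t₀ + 3⌋
      · rw [if_pos hk]
        have h1 := hC (t - k)
        rw [Real.norm_eq_abs] at h1
        have h2 : (h (t - k)) ^ 2 ≤ C ^ 2 := by
          rw [← sq_abs]
          have : (0:ℝ) ≤ |h (t - k)| := abs_nonneg _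
          nlinarith
        nlinarith [sq_nonneg (h (t - k) + p k), sq_nonneg (p k)]
      · rw [if_neg hk]
        have hknot : h (t - k) = 0 := by
          apply hzero
          rw [Finset.mem_Icc, not_and_or] at hk
          rcases hk with hk | hk
          · right
            rw [not_le] at hk
            have : (k : ℝ) < t₀ - 3 := by
              have := Int.ceil_le (z := k) (a := t₀ - 3)
              by_contra hcon
              push_neg at hcon
              exact absurd (Int.ceil_le.mpr hcon) (by omega)
            linarith [ht.1]
          · left
            rw [not_le] at hk
            have : t₀ + 3 < (k : ℝ) := by
              have := Int.lt_floor_add_one (t₀ + 3)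
              by_contra hcon
              push_neg at hcon
              exact absurd (Int.le_floor.mpr hcon) (by omega)
            linarith [ht.2]
        rw [hknot]
        nlinarith [sq_nonneg (p k)]
  have hfc : Continuous fun t : ℝ => ‖η t - p‖ := by
    have : (fun t : ℝ => ‖η t - p‖) = fun t => Real.sqrt (F t) := funext hnorm_eq
    rw [this]
    exact Real.continuous_sqrt.comp hFc
  -- the two-coordinate lower bound
  have coord : ∀ (t : ℝ) (n : ℤ),
      Real.sqrt ((h (t - n) - p n) ^ 2 + (h (t - (n + 1)) - p (n + 1)) ^ 2)
        ≤ ‖η t - p‖ := by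
    intro t n
    have hpair : (h (t - n) - p n) ^ 2 + (h (t - (n + 1)) - p (n + 1)) ^ 2
        ≤ ‖η t - p‖ ^ 2 := by
      have := key3 (η t - p) {n, n + 1}
      rw [Finset.sum_pair (by omega : n ≠ n + 1)] at this
      simpa [lp.coeFn_sub, Pi.sub_apply, hη] using this
    calc Real.sqrt ((h (t - n) - p n) ^ 2 + (h (t - (n + 1)) - p (n + 1)) ^ 2)
        ≤ Real.sqrt (‖η t - p‖ ^ 2) := Real.sqrt_le_sqrt hpair
      _ = ‖η t - p‖ := Real.sqrt_sq (norm_nonneg _)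
  have hρle : ∀ s ∈ Set.Icc (0 : ℝ) 1,
      ρ₀ ≤ Real.sqrt (h s ^ 2 + h (s - 1) ^ 2) := fun s hs => hρ₀.2 ⟨s, hs, rfl⟩
  set d := Metric.infDist p (Set.range η) with hddef
  have hd0 : 0 ≤ d := Metric.infDist_nonneg
  set ε := (ρ₀ - d) / 2 with hεdef
  have hεpos : 0 < ε := by
    rw [hεdef]; linarith
  have hne : (Set.range η).Nonempty := ⟨η 0, 0, rfl⟩
  obtain ⟨y, hymem, hy⟩ := (Metric.infDist_lt_iff hne).1
    (show d < d + ε by linarith)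
  obtain ⟨t₀, rfl⟩ := hymem
  have ht₀ : ‖η t₀ - p‖ < d + ε := by
    rwa [dist_eq_norm, norm_sub_rev] at hy
  -- tail bound
  have hev : ∀ᶠ k : ℤ in Filter.cofinite, (p k) ^ 2 < ε ^ 2 / 2 :=
    (key2 p).tendsto_cofinite_zero (gt_mem_nhds (by positivity))
  have hSfin : {k : ℤ | ¬ (p k) ^ 2 < ε ^ 2 / 2}.Finite :=
    Filter.eventually_cofinite.1 hev
  obtain ⟨N₀, hN₀⟩ : ∃ N₀ : ℤ, ∀ k : ℤ, ε ^ 2 / 2 ≤ (p k) ^ 2 → |k| ≤ N₀ := by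
    obtain ⟨N₀, hN₀⟩ := (hSfin.image fun k => |k|).bddAbove
    refine ⟨N₀, fun k hk => ?_⟩
    exact hN₀ ⟨k, by simpa using not_lt.2 hk, rfl⟩
  have htail : ∀ n : ℤ, N₀ + 2 ≤ |n| →
      Real.sqrt ((p n) ^ 2 + (p (n + 1)) ^ 2) ≤ ε := by
    intro n hn
    have h1 : (p n) ^ 2 < ε ^ 2 / 2 := by
      by_contra h'
      push_neg at h'
      have := hN₀ n h'
      omega
    have h2 : (p (n + 1)) ^ 2 < ε ^ 2 / 2 := by
      by_contra h'
      push_neg at h'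
      have := hN₀ (n + 1) h'
      rcases abs_cases n with ⟨e, _⟩ | ⟨e, _⟩ <;>
        rcases abs_cases (n + 1) with ⟨e2, _⟩ | ⟨e2, _⟩ <;> omega
    calc Real.sqrt ((p n) ^ 2 + (p (n + 1)) ^ 2)
        ≤ Real.sqrt (ε ^ 2) := Real.sqrt_le_sqrt (by linarith)
      _ = ε := Real.sqrt_sq hεpos.le
  -- lower bound far out
  have hout : ∀ t : ℝ, (N₀ : ℝ) + 3 ≤ |t| → d + ε ≤ ‖η t - p‖ := by
    intro t ht
    set n : ℤ := ⌊t⌋ with hndef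
    have hfl : (n : ℝ) ≤ t := Int.floor_le t
    have hfl2 : t < (n : ℝ) + 1 := Int.lt_floor_add_one t
    have hs1 : t - n ∈ Set.Icc (0 : ℝ) 1 := ⟨by linarith, by linarith⟩
    have hnabs : N₀ + 2 ≤ |n| := by
      rcases abs_cases t with ⟨e, h'⟩ | ⟨e, h'⟩
      · have h3 : (N₀ : ℝ) + 2 ≤ (n : ℝ) := by linarith [Int.sub_one_lt_floor t]
        have h4 : N₀ + 2 ≤ n := by exact_mod_cast h3
        calc N₀ + 2 ≤ n := h4
          _ ≤ |n| := le_abs_self n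
      · have h3 : (n : ℝ) ≤ -((N₀ : ℝ) + 3) := by linarith
        have h4 : n ≤ -(N₀ + 3) := by exact_mod_cast h3
        have : N₀ + 3 ≤ -n := by omega
        calc N₀ + 2 ≤ -n := by omega
          _ ≤ |n| := neg_le_abs n
    have h3 := htail n hnabs
    have h4 := coord t n
    have h5 := sqrt_tri_aux (h (t - n)) (h (t - (n + 1))) (p n) (p (n + 1))
    have h6 := hρle (t - n) hs1
    have hsub : t - ((n : ℝ) + 1) = (t - n) - 1 := by ring
    rw [hsub] at h4 h5
    have hρeq : ρ₀ = d + 2 * ε := by rw [hεdef]; ring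
    linarith
  -- minimize on a compact interval
  set R : ℝ := max ((N₀ : ℝ) + 3) |t₀| with hRdef
  have hR0 : 0 ≤ R := le_trans (abs_nonneg t₀) (le_max_right _ _)
  have ht₀mem : t₀ ∈ Set.Icc (-R) R := by
    rw [Set.mem_Icc]
    constructor
    · linarith [neg_abs_le t₀, le_max_right ((N₀ : ℝ) + 3) |t₀|]
    · exact le_trans (le_abs_self t₀) (le_max_right _ _)
  obtain ⟨s, hsmem, hsmin⟩ := isCompact_Icc.exists_isMinOn
    ⟨t₀, ht₀mem⟩ hfc.continuousOn
  refine ⟨s, ?_⟩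
  have hmin : ∀ t : ℝ, ‖η s - p‖ ≤ ‖η t - p‖ := by
    intro t
    by_cases htm : t ∈ Set.Icc (-R) R
    · exact hsmin htm
    · have habs : R < |t| := by
        by_contra h'
        push_neg at h'
        exact htm ⟨(abs_le.1 h').1, (abs_le.1 h').2⟩
      have h1 := hout t (le_trans (le_max_left _ _) habs.le)
      have h2 : ‖η s - p‖ ≤ ‖η t₀ - p‖ := hsmin ht₀mem
      linarith
  apply le_antisymm
  · by_contra h'
    push_neg at h'
    obtain ⟨y, ⟨t, rfl⟩, hyd⟩ := (Metric.infDist_lt_iff hne).1 h'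
    rw [dist_eq_norm, norm_sub_rev] at hyd
    exact absurd hyd (not_lt.2 (hmin t))
  · have hmem : η s ∈ Set.range η := Set.mem_range_self s
    have := Metric.infDist_le_dist_of_mem (x := p) hmem
    rwa [dist_eq_norm, norm_sub_rev] at this
end
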